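/- arXiv:2503.05922 — 2 statements merged into one kernel-verified Lean document; each statement's English description precedes it below -/
import Mathlib

section
/- Let ‖·‖_X and ‖·‖_Y be rearrangement-invariant function norms over (0,∞) with Lebesgue measure. Then for every a > 0 one has φ_Y(a) ≤ 2 · (sup over measurable f on (0,∞) with ‖f‖_X ≤ 1 of ‖f^* χ_{(a,∞)}‖_Y) · φ_X(a), where φ_X, φ_Y are the fundamental functions of X and Y. -/
/-!
Test the supremum on `f = φ_X(2a)⁻¹ χ_(0,2a)`, which has `X`-norm one. Its rearrangement is
`f` itself, so `f^* χ_(a,∞) = φ_X(2a)⁻¹ χ_(a,2a)` is equimeasurable with `φ_X(2a)⁻¹ χ_(0,a)` and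
the supremum is at least `φ_Y(a) / φ_X(2a)`. Splitting `(0,2a)` into two intervals of length `a`
and using the triangle inequality and rearrangement invariance gives `φ_X(2a) ≤ 2 φ_X(a)`.
-/

open MeasureTheory Set Filter Topology
open scoped ENNReal NNReal

noncomputable section

/-- The nonincreasing rearrangement of an `ℝ≥0∞`-valued function with respect to `μ`:
`f^*(t) = inf {λ : μ({f > λ}) ≤ t}`. -/
def rearr {α : Type*} [MeasurableSpace α] (μ : Measure α) (f : α → ℝ≥0∞) (t : ℝ) : ℝ≥0∞ :=
  sInf {l : ℝ≥0∞ | μ {x | l < f x} ≤ ENNReal.ofReal t}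

/-- A rearrangement-invariant function norm over the measure space `(α, μ)`, acting on
nonnegative (`ℝ≥0∞`-valued) measurable functions. -/
structure RINorm {α : Type*} [MeasurableSpace α] (μ : Measure α) where
  N : (α → ℝ≥0∞) → ℝ≥0∞
  add_le : ∀ f g : α → ℝ≥0∞, Measurable f → Measurable g →
    N (fun x => f x + g x) ≤ N f + N g
  smul_eq : ∀ (c : ℝ≥0) (f : α → ℝ≥0∞), Measurable f →
    N (fun x => (c : ℝ≥0∞) * f x) = (c : ℝ≥0∞) * N f
  eq_zero_iff : ∀ f : α → ℝ≥0∞, Measurable f → (N f = 0 ↔ f =ᵐ[μ] 0)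
  mono : ∀ f g : α → ℝ≥0∞, Measurable f → Measurable g →
    (∀ᵐ x ∂μ, f x ≤ g x) → N f ≤ N g
  fatou : ∀ (F : ℕ → α → ℝ≥0∞) (f : α → ℝ≥0∞), (∀ k, Measurable (F k)) → Measurable f →
    (∀ᵐ x ∂μ, Monotone fun k => F k x) → (∀ᵐ x ∂μ, (⨆ k, F k x) = f x) →
    (⨆ k, N (F k)) = N f
  indicator_lt_top : ∀ E : Set α, MeasurableSet E → μ E < ∞ →
    N (E.indicator fun _ => 1) < ∞
  exists_integral_le : ∀ E : Set α, MeasurableSet E → μ E < ∞ → ∃ C : ℝ≥0∞, C < ∞ ∧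
    ∀ f : α → ℝ≥0∞, Measurable f → (∫⁻ x in E, f x ∂μ) ≤ C * N f
  rearr_invariant : ∀ f g : α → ℝ≥0∞, Measurable f → Measurable g →
    (∀ l : ℝ≥0∞, μ {x | l < f x} = μ {x | l < g x}) → N f = N g

/-- Lebesgue measure on `(0,∞)`. -/
def μI : Measure ℝ := volume.restrict (Set.Ioi (0 : ℝ))

/-- The fundamental function of an r.i. norm over `(0,∞)`: `φ_X(t) = ‖χ_(0,t)‖_X`. -/
def fund (X : RINorm μI) (t : ℝ) : ℝ≥0∞ := X.N ((Set.Ioo (0 : ℝ) t).indicator fun _ => 1)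

lemma setOf_lt_indicator_const {α : Type*} (E : Set α) (c l : ℝ≥0∞) :
    {x | l < E.indicator (fun _ => c) x} = if l < c then E else ∅ := by
  ext x
  by_cases hx : x ∈ E <;> split_ifs with hl <;> simp [hx, hl]

lemma rearr_indicator_const {α : Type*} [MeasurableSpace α] (μ : Measure α) (E : Set α)
    (c : ℝ≥0∞) (t : ℝ) :
    rearr μ (E.indicator fun _ => c) t = if ENNReal.ofReal t < μ E then c else 0 := by
  simp only [rearr, setOf_lt_indicator_const]
  split_ifs with hE
  · have hlevels : {l : ℝ≥0∞ | μ (if l < c then E else ∅) ≤ ENNReal.ofReal t} = Ici c := by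
      ext l
      by_cases hl : l < c
      · simp only [hl, if_true, mem_ofPred_eq, mem_Ici]
        exact iff_of_false (not_le.mpr hE) (not_le.mpr hl)
      · simpa [hl] using not_lt.mp hl
    rw [hlevels, csInf_Ici]
  · exact nonpos_iff_eq_zero.mp
      (sInf_le ((measure_mono (by split_ifs <;> simp)).trans (not_lt.mp hE)))

namespace RINorm

variable {α : Type*} [MeasurableSpace α] {μ : Measure α} (X : RINorm μ)

lemma N_indicator_const (c : ℝ≥0) {E : Set α} (hE : MeasurableSet E) :
    X.N (E.indicator fun _ => (c : ℝ≥0∞)) = c * X.N (E.indicator fun _ => 1) := by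
  rw [← X.smul_eq c _ (measurable_const.indicator hE)]
  congr 1
  ext x
  by_cases hx : x ∈ E <;> simp [hx]

lemma N_indicator_eq_of_measure_eq (c : ℝ≥0∞) {E F : Set α} (hE : MeasurableSet E)
    (hF : MeasurableSet F) (h : μ E = μ F) :
    X.N (E.indicator fun _ => c) = X.N (F.indicator fun _ => c) := by
  refine X.rearr_invariant _ _ (measurable_const.indicator hE) (measurable_const.indicator hF)
    fun l => ?_
  rw [setOf_lt_indicator_const, setOf_lt_indicator_const]
  split_ifs
  exacts [h, rfl]

end RINorm

lemma μI_eq_volume {E : Set ℝ} (hE : E ⊆ Ioi 0) : μI E = volume E :=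
  Measure.restrict_eq_self _ hE

lemma μI_Ioo {x : ℝ} (hx : 0 ≤ x) (y : ℝ) : μI (Ioo x y) = ENNReal.ofReal (y - x) := by
  rw [μI_eq_volume fun z hz => hx.trans_lt hz.1, Real.volume_Ioo]

lemma rearr_indicator_Ioo_zero {b : ℝ} (hb : 0 < b) (c : ℝ≥0∞) :
    rearr μI ((Ioo 0 b).indicator fun _ => c) = (Iio b).indicator fun _ => c := by
  ext t
  simp only [rearr_indicator_const, μI_Ioo le_rfl, sub_zero, ENNReal.ofReal_lt_ofReal_iff hb,
    indicator_apply, mem_Iio]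

lemma N_indicator_eq_fund (X : RINorm μI) {E : Set ℝ} (hE : MeasurableSet E) {t : ℝ}
    (h : μI E = ENNReal.ofReal t) : X.N (E.indicator fun _ => 1) = fund X t :=
  X.N_indicator_eq_of_measure_eq 1 hE measurableSet_Ioo (by rw [h, μI_Ioo le_rfl, sub_zero])

lemma fund_lt_top (X : RINorm μI) (t : ℝ) : fund X t < ∞ :=
  X.indicator_lt_top _ measurableSet_Ioo (by simp [μI_Ioo le_rfl])

lemma fund_ne_zero (X : RINorm μI) {t : ℝ} (ht : 0 < t) : fund X t ≠ 0 := by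
  rw [fund, Ne, X.eq_zero_iff _ (measurable_const.indicator measurableSet_Ioo),
    indicator_ae_eq_zero, Function.support_const one_ne_zero, inter_univ, μI_Ioo le_rfl, sub_zero]
  simpa using ht

lemma fund_add_le (X : RINorm μI) {s : ℝ} (hs : 0 ≤ s) (t : ℝ) :
    fund X (s + t) ≤ fund X s + fund X t := by
  have hcover : Ioo 0 (s + t) ⊆ Ioc 0 s ∪ Ioo s (s + t) := fun x hx => by
    rcases le_or_gt x s with h | h
    exacts [Or.inl ⟨hx.1, h⟩, Or.inr ⟨h, hx.2⟩]
  have hdisj : Disjoint (Ioc 0 s) (Ioo s (s + t)) :=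
    Set.disjoint_left.mpr fun x h₁ h₂ => h₂.1.not_ge h₁.2
  calc fund X (s + t)
      ≤ X.N (fun x =>
          (Ioc 0 s).indicator (fun _ => 1) x + (Ioo s (s + t)).indicator (fun _ => 1) x) := by
        refine X.mono _ _ (measurable_const.indicator measurableSet_Ioo)
          ((measurable_const.indicator measurableSet_Ioc).add
            (measurable_const.indicator measurableSet_Ioo)) (ae_of_all _ fun x => ?_)
        have h := indicator_le_indicator_of_subset hcover (f := fun _ => (1 : ℝ≥0∞))
          (fun _ => zero_le) x
        rwa [indicator_union_of_disjoint hdisj] at h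
    _ ≤ X.N ((Ioc 0 s).indicator fun _ => 1) + X.N ((Ioo s (s + t)).indicator fun _ => 1) :=
        X.add_le _ _ (measurable_const.indicator measurableSet_Ioc)
          (measurable_const.indicator measurableSet_Ioo)
    _ = fund X s + fund X t := by
        rw [N_indicator_eq_fund X measurableSet_Ioc (by rw [μI_eq_volume Ioc_subset_Ioi_self,
          Real.volume_Ioc, sub_zero]),
          N_indicator_eq_fund X measurableSet_Ioo (by rw [μI_Ioo hs, add_sub_cancel_left])]

lemma fund_two_mul_le (X : RINorm μI) {a : ℝ} (ha : 0 ≤ a) : fund X (2 * a) ≤ 2 * fund X a := by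
  simpa only [two_mul] using fund_add_le X ha a

lemma mul_fund_le_iSup (X Y : RINorm μI) {a : ℝ} (ha : 0 < a) {c : ℝ≥0}
    (hc : c * fund X (2 * a) ≤ 1) :
    c * fund Y a ≤ ⨆ (f : ℝ → ℝ≥0∞) (_ : Measurable f) (_ : X.N f ≤ 1),
      Y.N ((Ioi a).indicator fun t => rearr μI f t) := by
  set g := (Ioo 0 (2 * a)).indicator fun _ => (c : ℝ≥0∞)
  have hg : Measurable g := measurable_const.indicator measurableSet_Ioo
  have hXg : X.N g ≤ 1 := by rwa [X.N_indicator_const c measurableSet_Ioo]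
  have hYg : Y.N ((Ioi a).indicator fun t => rearr μI g t) = c * fund Y a := by
    rw [rearr_indicator_Ioo_zero (by linarith), indicator_indicator, Ioi_inter_Iio,
      Y.N_indicator_const c measurableSet_Ioo,
      N_indicator_eq_fund Y measurableSet_Ioo (t := a) (by rw [μI_Ioo ha.le]; ring_nf)]
  exact hYg ▸ le_iSup_of_le g (le_iSup_of_le hg (le_iSup_of_le hXg le_rfl))

/-- `φ_Y(a) ≤ 2 · (sup_{‖f‖_X ≤ 1} ‖f^* χ_(a,∞)‖_Y) · φ_X(a)` for every `a > 0`. -/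
theorem fund_ratio_le_two_mul_sup (X Y : RINorm μI) (a : ℝ) (ha : 0 < a) :
    fund Y a ≤
      2 * (⨆ (f : ℝ → ℝ≥0∞) (_ : Measurable f) (_ : X.N f ≤ 1),
          Y.N ((Set.Ioi a).indicator fun t => rearr μI f t)) * fund X a := by
  have hφ0 : fund X (2 * a) ≠ 0 := fund_ne_zero X (by linarith)
  have hφtop : fund X (2 * a) ≠ ∞ := (fund_lt_top X _).ne
  set c : ℝ≥0 := (fund X (2 * a))⁻¹.toNNReal
  have hc : (c : ℝ≥0∞) * fund X (2 * a) = 1 := by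
    rw [ENNReal.coe_toNNReal (ENNReal.inv_ne_top.mpr hφ0), ENNReal.inv_mul_cancel hφ0 hφtop]
  calc fund Y a = c * fund Y a * fund X (2 * a) := by rw [mul_right_comm, hc, one_mul]
    _ ≤ _ * (2 * fund X a) :=
        mul_le_mul' (mul_fund_le_iSup X Y ha hc.le) (fund_two_mul_le X ha.le)
    _ = _ := by ring

end
end

section
/- Let M ∈ ℕ and let I_1, …, I_{M+1} be pairwise nonoverlapping bounded intervals in (0,∞), each of length δ > 0. Let ‖·‖_X and ‖·‖_Y be rearrangement-invariant function norms over (0,∞). Then for every nonnegative measurable function g on (0,∞): ‖ Σ_{j=1}^{M} χ_{I_j}(t) · δ^{-1} ∫_{I_j ∪ I_{j+1}} g ‖_Y ≤ 2 ( φ_Y(δ)/φ_X(δ) + sup_{‖f‖_X ≤ 1} ‖f^* χ_{(δ,∞)}‖_Y ) ‖g‖_X, where the supremum is over measurable f on (0,∞) with ‖f‖_X ≤ 1. -/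
open MeasureTheory Set Filter Topology
open scoped ENNReal NNReal

noncomputable section

/-!
The averaging operator `A g = ∑ₖ χ_{Jₖ} ⨍_{Jₖ} g` of disjoint intervals `Jₖ` of length `δ` is a
contraction in every r.i. norm. On each `Jₖ`, take the lower step function (on `n` cells) of the
decreasing rearrangement of `g χ_{Jₖ}`: the mean of its `n` cyclic shifts is a constant that tends
to `⨍_{Jₖ} g` from below, every shift is equimeasurable with the unshifted one, which is dominated
in distribution by `g`, and the Fatou property passes to the limit.

Then split `(A g)^*` at `δ`. On `(0, δ]` it is at most `maxₖ ⨍_{Jₖ} g ≤ ‖g‖_X / φ_X(δ)` (the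
contraction property for a single interval), contributing `φ_Y(δ) / φ_X(δ) ‖g‖_X`; on `(δ, ∞)`
apply the supremum of the statement to `A g / ‖g‖_X`. Finally, the average over `I_j ∪ I_{j+1}`
placed on `I_j` is at most the sum of the averages over `I_j` and over `I_{j+1}`, both placed on
`I_j`; the second function is equimeasurable with the averaging operator of the family
`(I_{j+1})_j`, so each of the two is bounded as above.
-/

open scoped Function

section Rearrangement

variable {α : Type*} [MeasurableSpace α] {μ : Measure α} {f g : α → ℝ≥0∞}

theorem rearr_antitone (μ : Measure α) (f : α → ℝ≥0∞) : Antitone (rearr μ f) :=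
  fun _ _ hst => sInf_le_sInf fun _ hl => hl.trans (ENNReal.ofReal_le_ofReal hst)

theorem measurable_rearr (μ : Measure α) (f : α → ℝ≥0∞) : Measurable (rearr μ f) :=
  (rearr_antitone μ f).measurable

theorem rearr_le_of_measure_le {l : ℝ≥0∞} {t : ℝ} (h : μ {x | l < f x} ≤ ENNReal.ofReal t) :
    rearr μ f t ≤ l :=
  sInf_le h

theorem measure_lt_rearr_le (t : ℝ) : μ {x | rearr μ f t < f x} ≤ ENNReal.ofReal t := by
  obtain ⟨u, hu_anti, hu_lim, hu_mem⟩ := exists_seq_tendsto_sInf (S := {l : ℝ≥0∞ |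
    μ {x | l < f x} ≤ ENNReal.ofReal t}) ⟨⊤, by simp⟩ (OrderBot.bddBelow _)
  have hcover : {x | rearr μ f t < f x} ⊆ ⋃ n, {x | u n < f x} := fun x hx =>
    mem_iUnion.2 (hu_lim.eventually_lt_const hx).exists
  calc μ {x | rearr μ f t < f x} ≤ μ (⋃ n, {x | u n < f x}) := measure_mono hcover
    _ = ⨆ n, μ {x | u n < f x} :=
      Monotone.measure_iUnion fun _ _ hmn _ hx => (hu_anti hmn).trans_lt hx
    _ ≤ ENNReal.ofReal t := iSup_le hu_mem

theorem lt_rearr_iff {l : ℝ≥0∞} {t : ℝ} :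
    l < rearr μ f t ↔ ENNReal.ofReal t < μ {x | l < f x} := by
  constructor
  · intro h
    by_contra! hle
    exact (rearr_le_of_measure_le hle).not_gt h
  · intro h
    by_contra! hle
    exact ((measure_mono fun x hx => hle.trans_lt hx).trans (measure_lt_rearr_le t)).not_gt h

theorem rearr_le_of_le {C : ℝ≥0∞} (h : ∀ x, f x ≤ C) (t : ℝ) : rearr μ f t ≤ C :=
  rearr_le_of_measure_le (by simp [(h _).not_gt])

theorem rearr_eq_zero_of_measure_le {t : ℝ} (h : μ {x | 0 < f x} ≤ ENNReal.ofReal t) :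
    rearr μ f t = 0 :=
  nonpos_iff_eq_zero.1 (rearr_le_of_measure_le h)

theorem rearr_le_rearr_of_measure_le (h : ∀ l, μ {x | l < f x} ≤ μ {x | l < g x}) (t : ℝ) :
    rearr μ f t ≤ rearr μ g t :=
  sInf_le_sInf fun _ hl => (h _).trans hl

theorem rearr_const_mul {c : ℝ≥0∞} (hc0 : c ≠ 0) (hct : c ≠ ⊤) (t : ℝ) :
    rearr μ (fun x => c * f x) t = c * rearr μ f t := by
  have hdiv : ∀ a b : ℝ≥0∞, a / c < b ↔ a < c * b := fun a b => by
    rw [ENNReal.div_lt_iff (.inl hc0) (.inl hct), mul_comm]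
  refine eq_of_forall_lt_iff fun l => ?_
  simp only [lt_rearr_iff, ← hdiv, lt_rearr_iff (f := f)]

end Rearrangement

section HalfLine

theorem μI_apply (s : Set ℝ) : μI s = volume (s ∩ Ioi 0) :=
  Measure.restrict_apply' measurableSet_Ioi

theorem μI_eq_volume_of_subset {s : Set ℝ} (h : s ⊆ Ioi 0) : μI s = volume s := by
  rw [μI_apply, inter_eq_self_of_subset_left h]

theorem setLIntegral_μI {s : Set ℝ} (hs : MeasurableSet s) (h : s ⊆ Ioi 0) (f : ℝ → ℝ≥0∞) :
    ∫⁻ x in s, f x ∂μI = ∫⁻ x in s, f x := by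
  rw [μI, Measure.restrict_restrict hs, inter_eq_self_of_subset_left h]

instance : SigmaFinite μI := by
  unfold μI
  infer_instance

theorem μI_ofReal_lt (D : ℝ≥0∞) : μI {t | ENNReal.ofReal t < D} = D := by
  rcases eq_or_ne D ⊤ with rfl | hD
  · simp [μI_apply]
  · have : {t | ENNReal.ofReal t < D} ∩ Ioi 0 = Ioo 0 D.toReal := by
      ext t
      simp only [mem_inter_iff, mem_ofPred_eq, mem_Ioi, mem_Ioo]
      exact ⟨fun ⟨h, ht⟩ => ⟨ht, (ENNReal.ofReal_lt_iff_lt_toReal ht.le hD).1 h⟩,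
        fun ⟨ht, h⟩ => ⟨(ENNReal.ofReal_lt_iff_lt_toReal ht.le hD).2 h, ht⟩⟩
    rw [μI_apply, this, Real.volume_Ioo, sub_zero, ENNReal.ofReal_toReal hD]

theorem μI_lt_rearr (f : ℝ → ℝ≥0∞) (l : ℝ≥0∞) :
    μI {t | l < rearr μI f t} = μI {x | l < f x} := by
  simp only [lt_rearr_iff, μI_ofReal_lt]

theorem lintegral_eq_lintegral_measure_lt {α : Type*} [MeasurableSpace α] (μ : Measure α)
    [SFinite μ] {f : α → ℝ≥0∞} (hf : Measurable f) :
    ∫⁻ x, f x ∂μ = ∫⁻ t, μ {x | ENNReal.ofReal t < f x} ∂μI := by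
  have hs : MeasurableSet {p : α × ℝ | ENNReal.ofReal p.2 < f p.1} :=
    measurableSet_lt (ENNReal.measurable_ofReal.comp measurable_snd) (hf.comp measurable_fst)
  calc ∫⁻ x, f x ∂μ = ∫⁻ x, μI (Prod.mk x ⁻¹' {p | ENNReal.ofReal p.2 < f p.1}) ∂μ := by
        simp only [preimage_ofPred_eq, μI_ofReal_lt]
    _ = ∫⁻ t, μ {x | ENNReal.ofReal t < f x} ∂μI := by
        rw [← Measure.prod_apply hs, Measure.prod_apply_symm hs]
        rfl

theorem lintegral_rearr {f : ℝ → ℝ≥0∞} (hf : Measurable f) :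
    ∫⁻ t, rearr μI f t ∂μI = ∫⁻ x, f x ∂μI := by
  simp only [lintegral_eq_lintegral_measure_lt μI (measurable_rearr μI f),
    lintegral_eq_lintegral_measure_lt μI hf, μI_lt_rearr]

theorem setLIntegral_Ioc_rearr {f : ℝ → ℝ≥0∞} (hf : Measurable f) {δ : ℝ}
    (hfδ : μI {x | 0 < f x} ≤ ENNReal.ofReal δ) :
    ∫⁻ t in Ioc 0 δ, rearr μI f t = ∫⁻ x, f x ∂μI := by
  rw [← lintegral_rearr hf, ← setLIntegral_μI measurableSet_Ioc Ioc_subset_Ioi_self,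
    ← lintegral_indicator measurableSet_Ioc]
  refine lintegral_congr_ae ((ae_restrict_mem measurableSet_Ioi).mono fun t (ht : 0 < t) => ?_)
  by_cases htδ : t ≤ δ
  · exact Set.indicator_of_mem (s := Ioc 0 δ) ⟨ht, htδ⟩ _
  · rw [Set.indicator_of_notMem (s := Ioc 0 δ) (fun h => htδ h.2), rearr_eq_zero_of_measure_le
      (hfδ.trans (ENNReal.ofReal_le_ofReal (not_le.1 htδ).le))]

theorem iUnion_Ioc_div_add_one {δ : ℝ} (hδ : 0 ≤ δ) :
    ⋃ n : ℕ, Ioc (δ / (n + 1 : ℕ)) δ = Ioc 0 δ := by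
  ext t
  simp only [mem_iUnion, mem_Ioc]
  constructor
  · rintro ⟨n, ht, htδ⟩
    exact ⟨(div_nonneg hδ (by positivity)).trans_lt ht, htδ⟩
  · rintro ⟨ht, htδ⟩
    obtain ⟨n, hn⟩ := exists_nat_gt (δ / t)
    refine ⟨n, (div_lt_iff₀ (by positivity)).2 ?_, htδ⟩
    have := (div_lt_iff₀ ht).1 hn
    push_cast
    nlinarith

end HalfLine

section DisjointSum

theorem sum_indicator_apply_of_mem {α ι M : Type*} [Fintype ι] [AddCommMonoid M] {S : ι → Set α}
    (hS : Pairwise (Disjoint on S))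
    (f : ι → α → M) {x : α} {k : ι} (hx : x ∈ S k) : ∑ j, (S j).indicator (f j) x = f k x := by
  rw [Finset.sum_eq_single k (fun j _ hjk => indicator_of_notMem
    (fun hxj => (hS hjk).ne_of_mem hxj hx rfl) _) (by simp), indicator_of_mem hx]

variable {α ι : Type*} [MeasurableSpace α] [Fintype ι] {μ : Measure α} {S : ι → Set α}

theorem measure_lt_indicator_const {s : Set α} (c l : ℝ≥0∞) :
    μ {x | l < s.indicator (fun _ => c) x} = if l < c then μ s else 0 := by
  have : {x | l < s.indicator (fun _ => c) x} = if l < c then s else ∅ := by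
    ext x
    by_cases hx : x ∈ s <;> by_cases hl : l < c <;> simp [hx, hl]
  rw [this]
  split_ifs <;> simp

theorem measure_lt_sum_indicator (hSm : ∀ k, MeasurableSet (S k)) (hS : Pairwise (Disjoint on S))
    {f : ι → α → ℝ≥0∞} (hf : ∀ k, Measurable (f k)) (l : ℝ≥0∞) :
    μ {x | l < ∑ k, (S k).indicator (f k) x} = ∑ k, μ (S k ∩ {x | l < f k x}) := by
  have hunion : {x | l < ∑ k, (S k).indicator (f k) x} = ⋃ k, S k ∩ {x | l < f k x} := by
    ext x
    simp only [mem_iUnion, mem_inter_iff, mem_ofPred_eq]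
    constructor
    · intro h
      by_cases hx : ∃ k, x ∈ S k
      · obtain ⟨k, hk⟩ := hx
        exact ⟨k, hk, by rwa [sum_indicator_apply_of_mem hS f hk] at h⟩
      · simp only [not_exists] at hx
        simp [indicator_of_notMem (hx _)] at h
    · rintro ⟨k, hk, h⟩
      rwa [sum_indicator_apply_of_mem hS f hk]
  rw [hunion, measure_iUnion (fun j k hjk => (hS hjk).mono inter_subset_left inter_subset_left)
    (fun k => (hSm k).inter (measurableSet_lt measurable_const (hf k))), tsum_fintype]

theorem measure_lt_sum_indicator_const (hSm : ∀ k, MeasurableSet (S k))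
    (hS : Pairwise (Disjoint on S)) (c : ι → ℝ≥0∞) (l : ℝ≥0∞) :
    μ {x | l < ∑ k, (S k).indicator (fun _ => c k) x} = ∑ k, if l < c k then μ (S k) else 0 := by
  rw [measure_lt_sum_indicator hSm hS fun _ => measurable_const]
  congr! 1 with k
  split_ifs with h <;> simp [h]

theorem sum_measure_inter_le (hSm : ∀ k, MeasurableSet (S k)) (hS : Pairwise (Disjoint on S))
    {A : Set α} (hA : MeasurableSet A) : ∑ k, μ (S k ∩ A) ≤ μ A := by
  calc ∑ k, μ (S k ∩ A) = μ (⋃ k, S k ∩ A) := by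
        rw [measure_iUnion (fun j k hjk => (hS hjk).mono inter_subset_left inter_subset_left)
          fun k => (hSm k).inter hA, tsum_fintype]
    _ ≤ μ A := measure_mono (iUnion_subset fun _ => inter_subset_right)

end DisjointSum

namespace RINorm

section General

variable {α : Type*} [MeasurableSpace α] {μ : Measure α} (X : RINorm μ)

theorem N_zero : X.N (fun _ => 0) = 0 :=
  (X.eq_zero_iff _ measurable_const).2 (.of_forall fun _ => rfl)

theorem N_const_mul {c : ℝ≥0∞} (hc : c ≠ ⊤) {f : α → ℝ≥0∞} (hf : Measurable f) :
    X.N (fun x => c * f x) = c * X.N f := by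
  lift c to ℝ≥0 using hc
  exact X.smul_eq c f hf

theorem N_sum_le {ι : Type*} (s : Finset ι) {F : ι → α → ℝ≥0∞} (hF : ∀ i, Measurable (F i)) :
    X.N (fun x => ∑ i ∈ s, F i x) ≤ ∑ i ∈ s, X.N (F i) := by
  classical
  induction s using Finset.induction with
  | empty => simpa using (X.N_zero).le
  | insert a s ha ih =>
    simp only [Finset.sum_insert ha]
    exact (X.add_le _ _ (hF a) (Finset.measurable_sum s fun i _ => hF i)).trans
      (add_le_add_right ih _)

theorem N_iSup_le {F : ℕ → α → ℝ≥0∞} (hF : ∀ n, Measurable (F n))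
    (hmono : ∀ x, Monotone fun n => F n x) {C : ℝ≥0∞} (hC : ∀ n, X.N (F n) ≤ C) :
    X.N (fun x => ⨆ n, F n x) ≤ C := by
  rw [← X.fatou F _ hF (.iSup hF) (.of_forall hmono) (.of_forall fun _ => rfl)]
  exact iSup_le hC

theorem N_average_le {ι : Type*} [Fintype ι] [Nonempty ι] {F : ι → α → ℝ≥0∞}
    (hF : ∀ i, Measurable (F i)) {C : ℝ≥0∞} (hC : ∀ i, X.N (F i) ≤ C) :
    X.N (fun x => (Fintype.card ι : ℝ≥0∞)⁻¹ * ∑ i, F i x) ≤ C := by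
  have hcard : (Fintype.card ι : ℝ≥0∞) ≠ 0 := by simp
  rw [X.N_const_mul (by simp [hcard]) (Finset.measurable_sum _ fun i _ => hF i)]
  calc (Fintype.card ι : ℝ≥0∞)⁻¹ * X.N (fun x => ∑ i, F i x)
      ≤ (Fintype.card ι : ℝ≥0∞)⁻¹ * ∑ _i : ι, C := by
        gcongr
        exact (X.N_sum_le _ hF).trans (Finset.sum_le_sum fun i _ => hC i)
    _ = C := by
        rw [Finset.sum_const, Finset.card_univ, nsmul_eq_mul, ← mul_assoc,
          ENNReal.inv_mul_cancel hcard (by simp), one_mul]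

end General

variable (X : RINorm μI)

theorem N_rearr {f : ℝ → ℝ≥0∞} (hf : Measurable f) : X.N (rearr μI f) = X.N f :=
  X.rearr_invariant _ _ (measurable_rearr μI f) hf (μI_lt_rearr f)

theorem N_le_of_measure_lt_le {f g : ℝ → ℝ≥0∞} (hf : Measurable f) (hg : Measurable g)
    (h : ∀ l, μI {x | l < f x} ≤ μI {x | l < g x}) : X.N f ≤ X.N g := by
  rw [← X.N_rearr hf, ← X.N_rearr hg]
  exact X.mono _ _ (measurable_rearr μI f) (measurable_rearr μI g)
    (.of_forall (rearr_le_rearr_of_measure_le h))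

theorem N_indicator_const_s1 {s : Set ℝ} (hs : MeasurableSet s) {t : ℝ}
    (hst : μI s = ENNReal.ofReal t) {c : ℝ≥0∞} (hc : c ≠ ⊤) :
    X.N (s.indicator fun _ => c) = c * fund X t := by
  have hIoo : μI (Ioo 0 t) = ENNReal.ofReal t := by
    rw [μI_eq_volume_of_subset Ioo_subset_Ioi_self, Real.volume_Ioo, sub_zero]
  calc X.N (s.indicator fun _ => c) = X.N ((Ioo 0 t).indicator fun _ => c) :=
        X.rearr_invariant _ _ (measurable_const.indicator hs)
          (measurable_const.indicator measurableSet_Ioo) fun l => by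
            simp only [measure_lt_indicator_const, hst, hIoo]
    _ = X.N (fun x => c * (Ioo 0 t).indicator (fun _ => 1) x) := by
        simp only [← indicator_const_mul, mul_one]
    _ = c * fund X t := X.N_const_mul hc (measurable_const.indicator measurableSet_Ioo)

theorem fund_ne_zero {t : ℝ} (ht : 0 < t) : fund X t ≠ 0 := by
  rw [fund, Ne, X.eq_zero_iff _ (measurable_const.indicator measurableSet_Ioo),
    indicator_ae_eq_zero, Function.support_const one_ne_zero, inter_univ,
    μI_eq_volume_of_subset Ioo_subset_Ioi_self, Real.volume_Ioo, sub_zero]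
  exact (ENNReal.ofReal_pos.2 ht).ne'

theorem fund_ne_top (t : ℝ) : fund X t ≠ ⊤ :=
  (X.indicator_lt_top _ measurableSet_Ioo (by
    rw [μI_eq_volume_of_subset Ioo_subset_Ioi_self, Real.volume_Ioo]
    exact ENNReal.ofReal_lt_top)).ne

end RINorm


section Cells

variable {h : ℝ} {N : ℕ}

def cellStep (h : ℝ) (a : Fin N → ℝ≥0∞) (t : ℝ) : ℝ≥0∞ :=
  ∑ j : Fin N, (Ioc ((j : ℕ) * h) ((j : ℕ) * h + h)).indicator (fun _ => a j) t

theorem pairwise_disjoint_cell (hh : 0 ≤ h) :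
    Pairwise (Disjoint on fun j : Fin N => Ioc ((j : ℕ) * h) ((j : ℕ) * h + h)) := by
  have key : ∀ i j : Fin N, i < j → (i : ℕ) * h + h ≤ (j : ℕ) * h := fun i j hij => by
    have : ((i : ℕ) : ℝ) + 1 ≤ (j : ℕ) := by exact_mod_cast hij
    nlinarith
  intro i j hij
  rcases hij.lt_or_gt with hlt | hlt
  · exact Ioc_disjoint_Ioc_of_le (key i j hlt)
  · exact (Ioc_disjoint_Ioc_of_le (key j i hlt)).symm

theorem exists_mem_cell (hh : 0 < h) {t : ℝ} (ht : t ∈ Ioc 0 (N * h)) :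
    ∃ j : Fin N, t ∈ Ioc ((j : ℕ) * h) ((j : ℕ) * h + h) := by
  have hth : 0 < t / h := div_pos ht.1 hh
  obtain ⟨j, hj⟩ := Nat.exists_eq_add_one.2 (Nat.ceil_pos.2 hth)
  have hup : t / h ≤ j + 1 := by exact_mod_cast hj ▸ Nat.le_ceil (t / h)
  have hlow : ((j + 1 : ℕ) : ℝ) < t / h + 1 := hj ▸ Nat.ceil_lt_add_one hth.le
  have hjN : j < N := by
    have := Nat.ceil_le.2 ((div_le_iff₀ hh).2 ht.2)
    omega
  refine ⟨⟨j, hjN⟩, ?_, ?_⟩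
  · show (j : ℝ) * h < t
    push_cast at hlow
    exact (lt_div_iff₀ hh).1 (by linarith)
  · show t ≤ (j : ℝ) * h + h
    linarith [(div_le_iff₀ hh).1 hup]

theorem cellStep_apply_of_mem (hh : 0 ≤ h) (a : Fin N → ℝ≥0∞) {t : ℝ} {j : Fin N}
    (ht : t ∈ Ioc ((j : ℕ) * h) ((j : ℕ) * h + h)) : cellStep h a t = a j :=
  sum_indicator_apply_of_mem (pairwise_disjoint_cell hh) (fun j _ => a j) ht

theorem measurable_cellStep (h : ℝ) (a : Fin N → ℝ≥0∞) : Measurable (cellStep h a) := by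
  unfold cellStep
  exact Finset.measurable_sum _ fun _ _ => measurable_const.indicator measurableSet_Ioc

theorem Ioc_inter_setOf_lt_cellStep (hh : 0 ≤ h) (a : Fin N → ℝ≥0∞) (l : ℝ≥0∞) :
    Ioc 0 (N * h) ∩ {t | l < cellStep h a t} = {t | l < cellStep h a t} := by
  refine inter_eq_right.2 fun t ht => ?_
  by_contra hout
  have hcell : ∀ j : Fin N, t ∉ Ioc ((j : ℕ) * h) ((j : ℕ) * h + h) := fun j hj => by
    have : ((j : ℕ) : ℝ) + 1 ≤ N := by exact_mod_cast j.isLt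
    exact hout ⟨(mul_nonneg (Nat.cast_nonneg _) hh).trans_lt hj.1, hj.2.trans (by nlinarith)⟩
  simp [cellStep, indicator_of_notMem (hcell _)] at ht

theorem volume_lt_cellStep (hh : 0 ≤ h) (a : Fin N → ℝ≥0∞) (l : ℝ≥0∞) :
    volume (Ioc 0 (N * h) ∩ {t | l < cellStep h a t}) =
      ∑ j, if l < a j then ENNReal.ofReal h else 0 := by
  rw [Ioc_inter_setOf_lt_cellStep hh]
  simp only [cellStep]
  rw [measure_lt_sum_indicator_const (fun _ => measurableSet_Ioc) (pairwise_disjoint_cell hh)]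
  simp [Real.volume_Ioc]

theorem volume_lt_cellStep_add {n : ℕ} (hh : 0 ≤ h) (a : Fin (n + 1) → ℝ≥0∞) (i : Fin (n + 1))
    (l : ℝ≥0∞) :
    volume (Ioc 0 ((n + 1 : ℕ) * h) ∩ {t | l < cellStep h (fun j => a (j + i)) t}) =
      volume (Ioc 0 ((n + 1 : ℕ) * h) ∩ {t | l < cellStep h a t}) := by
  simp only [volume_lt_cellStep hh]
  exact Equiv.sum_comp (Equiv.addRight i) fun j => if l < a j then ENNReal.ofReal h else 0

theorem cellStep_le_of_antitone {w : ℝ → ℝ≥0∞} (hw : Antitone w) (hh : 0 ≤ h) (t : ℝ) :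
    cellStep h (fun j : Fin N => w ((j : ℕ) * h + h)) t ≤ w t := by
  by_cases ht : ∃ j : Fin N, t ∈ Ioc ((j : ℕ) * h) ((j : ℕ) * h + h)
  · obtain ⟨j, hj⟩ := ht
    rw [cellStep_apply_of_mem hh _ hj]
    exact hw hj.2
  · simp only [not_exists] at ht
    simp [cellStep, indicator_of_notMem (ht _)]

theorem sum_le_sum_cellStep_add {n : ℕ} (hh : 0 < h) (a : Fin (n + 1) → ℝ≥0∞) {t : ℝ}
    (ht : t ∈ Ioc 0 ((n + 1 : ℕ) * h)) : ∑ j, a j ≤ ∑ i, cellStep h (fun j => a (j + i)) t := by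
  obtain ⟨j, hj⟩ := exists_mem_cell hh ht
  simp only [cellStep_apply_of_mem hh.le _ hj]
  exact (Equiv.sum_comp (Equiv.addLeft j) a).ge

/-- On each cell `w` dominates its value at the right end, which dominates `w` on the next
cell. -/
theorem setLIntegral_le_cellStep {w : ℝ → ℝ≥0∞} (hw : Antitone w) (hh : 0 < h) :
    ∫⁻ t in Ioc h (N * h), w t ≤ ENNReal.ofReal h * ∑ j : Fin N, w ((j : ℕ) * h + h) := by
  have hshift : ∫⁻ t in Ioc 0 (N * h), w (t + h) = ∫⁻ t in Ioc h (N * h + h), w t := by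
    have := (measurePreserving_add_right volume h).setLIntegral_comp_preimage_emb
      (MeasurableEquiv.addRight h).measurableEmbedding w (Ioc h (N * h + h))
    rwa [preimage_add_const_Ioc, sub_self, add_sub_cancel_right] at this
  calc ∫⁻ t in Ioc h (N * h), w t ≤ ∫⁻ t in Ioc h (N * h + h), w t :=
        lintegral_mono_set (Ioc_subset_Ioc_right (by linarith))
    _ = ∫⁻ t in Ioc 0 (N * h), w (t + h) := hshift.symm
    _ ≤ ∫⁻ t in Ioc 0 (N * h), cellStep h (fun j : Fin N => w ((j : ℕ) * h + h)) t := by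
        refine setLIntegral_mono (measurable_cellStep _ _) fun t ht => ?_
        obtain ⟨j, hj⟩ := exists_mem_cell hh ht
        rw [cellStep_apply_of_mem hh.le _ hj]
        exact hw (by linarith [hj.1])
    _ ≤ ∫⁻ t, cellStep h (fun j : Fin N => w ((j : ℕ) * h + h)) t := setLIntegral_le_lintegral _ _
    _ = ENNReal.ofReal h * ∑ j : Fin N, w ((j : ℕ) * h + h) := by
        unfold cellStep
        rw [lintegral_finsetSum _ fun _ _ => measurable_const.indicator measurableSet_Ioc]
        simp [lintegral_indicator_const measurableSet_Ioc, Real.volume_Ioc, Finset.mul_sum,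
          mul_comm]

theorem setLIntegral_le_sum_cellStep_add {n : ℕ} {w : ℝ → ℝ≥0∞} (hw : Antitone w) (hh : 0 < h)
    {t : ℝ} (ht : t ∈ Ioc 0 ((n + 1 : ℕ) * h)) :
    ∫⁻ s in Ioc h ((n + 1 : ℕ) * h), w s ≤ ENNReal.ofReal h *
      ∑ i, cellStep h (fun j : Fin (n + 1) => w (((j + i : Fin (n + 1)) : ℕ) * h + h)) t :=
  (setLIntegral_le_cellStep hw hh).trans
    (mul_le_mul_right (sum_le_sum_cellStep_add hh (fun j => w ((j : ℕ) * h + h)) ht) _)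

end Cells

section Glue

variable {ι : Type*} [Fintype ι] {δ : ℝ} {e : ι → ℝ} {u v : ι → ℝ → ℝ≥0∞}

def glue (δ : ℝ) (e : ι → ℝ) (u : ι → ℝ → ℝ≥0∞) (x : ℝ) : ℝ≥0∞ :=
  ∑ k, (Ioc (e k) (e k + δ)).indicator (fun y => u k (y - e k)) x

theorem measurable_glue (hu : ∀ k, Measurable (u k)) : Measurable (glue δ e u) := by
  unfold glue
  exact Finset.measurable_sum _ fun k _ =>
    ((hu k).comp (measurable_id.sub_const _)).indicator measurableSet_Ioc

theorem glue_apply_of_mem (hd : Pairwise (Disjoint on fun k => Ioc (e k) (e k + δ))) {x : ℝ}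
    {k : ι} (hx : x ∈ Ioc (e k) (e k + δ)) : glue δ e u x = u k (x - e k) :=
  sum_indicator_apply_of_mem hd _ hx

theorem glue_apply_of_forall_notMem {x : ℝ} (hx : ∀ k, x ∉ Ioc (e k) (e k + δ)) :
    glue δ e u x = 0 :=
  Finset.sum_eq_zero fun k _ => indicator_of_notMem (hx k) _

theorem glue_mono (h : ∀ k t, u k t ≤ v k t) (x : ℝ) : glue δ e u x ≤ glue δ e v x :=
  Finset.sum_le_sum fun _ _ => indicator_le_indicator (h _ _)

theorem μI_lt_glue (he : ∀ k, 0 ≤ e k) (hd : Pairwise (Disjoint on fun k => Ioc (e k) (e k + δ)))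
    (hu : ∀ k, Measurable (u k)) (l : ℝ≥0∞) :
    μI {x | l < glue δ e u x} = ∑ k, volume (Ioc 0 δ ∩ {t | l < u k t}) := by
  simp only [glue]
  rw [measure_lt_sum_indicator (f := fun k y => u k (y - e k)) (fun _ => measurableSet_Ioc) hd
    fun k => (hu k).comp (measurable_id.sub_const _)]
  congr! 1 with k
  have hpre : Ioc (e k) (e k + δ) ∩ {x | l < u k (x - e k)} =
      (fun x => x + -e k) ⁻¹' (Ioc 0 δ ∩ {t | l < u k t}) := by
    simp only [← sub_eq_add_neg, preimage_inter, preimage_sub_const_Ioc, zero_add, add_comm δ]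
    rfl
  rw [μI_eq_volume_of_subset (inter_subset_left.trans
    (Ioc_subset_Ioi_self.trans (Ioi_subset_Ioi (he k)))), hpre, measure_preimage_add_right]

theorem RINorm.N_glue_le (X : RINorm μI) {e' : ι → ℝ} (he : ∀ k, 0 ≤ e k)
    (hd : Pairwise (Disjoint on fun k => Ioc (e k) (e k + δ))) (he' : ∀ k, 0 ≤ e' k)
    (hd' : Pairwise (Disjoint on fun k => Ioc (e' k) (e' k + δ)))
    (hu : ∀ k, Measurable (u k)) (hv : ∀ k, Measurable (v k))
    (h : ∀ k l, volume (Ioc 0 δ ∩ {t | l < u k t}) ≤ volume (Ioc 0 δ ∩ {t | l < v k t})) :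
    X.N (glue δ e u) ≤ X.N (glue δ e' v) :=
  X.N_le_of_measure_lt_le (measurable_glue hu) (measurable_glue hv) fun l => by
    rw [μI_lt_glue he hd hu, μI_lt_glue he' hd' hv]
    exact Finset.sum_le_sum fun k _ => h k l

theorem RINorm.N_glue_rearr_le (X : RINorm μI) (he : ∀ k, 0 ≤ e k)
    (hd : Pairwise (Disjoint on fun k => Ioc (e k) (e k + δ))) {g : ℝ → ℝ≥0∞} (hg : Measurable g) :
    X.N (glue δ e fun k => rearr μI ((Ioc (e k) (e k + δ)).indicator g)) ≤ X.N g := by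
  refine X.N_le_of_measure_lt_le (measurable_glue fun _ => measurable_rearr _ _) hg fun l => ?_
  rw [μI_lt_glue he hd fun _ => measurable_rearr _ _]
  calc ∑ k, volume (Ioc 0 δ ∩ {t | l < rearr μI ((Ioc (e k) (e k + δ)).indicator g) t})
      ≤ ∑ k, μI {t | l < rearr μI ((Ioc (e k) (e k + δ)).indicator g) t} := by
        refine Finset.sum_le_sum fun k _ => ?_
        rw [← μI_eq_volume_of_subset (inter_subset_left.trans Ioc_subset_Ioi_self)]
        exact measure_mono inter_subset_right
    _ = ∑ k, μI (Ioc (e k) (e k + δ) ∩ {x | l < g x}) := by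
        congr! 1 with k
        rw [μI_lt_rearr]
        congr 1
        ext x
        by_cases hx : x ∈ Ioc (e k) (e k + δ) <;> simp [hx]
    _ ≤ μI {x | l < g x} :=
        sum_measure_inter_le (fun _ => measurableSet_Ioc) hd (measurableSet_lt measurable_const hg)

end Glue

section Averaging

variable {ι : Type*} [Fintype ι] {δ : ℝ} {e : ι → ℝ} {g : ℝ → ℝ≥0∞}

def averageOp (δ : ℝ) (e : ι → ℝ) (g : ℝ → ℝ≥0∞) : ℝ → ℝ≥0∞ :=
  glue δ e fun k _ => (ENNReal.ofReal δ)⁻¹ * ∫⁻ s in Ioc (e k) (e k + δ), g s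

theorem glue_le_average_glue_cellStep {h : ℝ} {n : ℕ} (hh : 0 < h) (hN : ((n + 1 : ℕ) : ℝ) * h = δ)
    (hd : Pairwise (Disjoint on fun k => Ioc (e k) (e k + δ))) {w : ι → ℝ → ℝ≥0∞}
    (hw : ∀ k, Antitone (w k)) (x : ℝ) :
    glue δ e (fun k _ => (ENNReal.ofReal δ)⁻¹ * ∫⁻ t in Ioc h δ, w k t) x ≤
      ((n + 1 : ℕ) : ℝ≥0∞)⁻¹ * ∑ i : Fin (n + 1), glue δ e (fun k =>
        cellStep h fun j => w k (((j + i : Fin (n + 1)) : ℕ) * h + h)) x := by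
  by_cases hx : ∃ k, x ∈ Ioc (e k) (e k + δ)
  · obtain ⟨k, hk⟩ := hx
    simp only [glue_apply_of_mem hd hk]
    have ht : x - e k ∈ Ioc 0 ((n + 1 : ℕ) * h) := by
      rw [hN]
      exact ⟨by linarith [hk.1], by linarith [hk.2]⟩
    have hscale : (ENNReal.ofReal δ)⁻¹ * ENNReal.ofReal h = ((n + 1 : ℕ) : ℝ≥0∞)⁻¹ := by
      rw [← hN, ENNReal.ofReal_mul (Nat.cast_nonneg _), ENNReal.ofReal_natCast,
        ENNReal.mul_inv (by simp) (by simp), mul_assoc,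
        ENNReal.inv_mul_cancel (ENNReal.ofReal_pos.2 hh).ne' ENNReal.ofReal_ne_top, mul_one]
    calc (ENNReal.ofReal δ)⁻¹ * ∫⁻ t in Ioc h δ, w k t
        = (ENNReal.ofReal δ)⁻¹ * ∫⁻ t in Ioc h ((n + 1 : ℕ) * h), w k t := by rw [hN]
      _ ≤ (ENNReal.ofReal δ)⁻¹ * (ENNReal.ofReal h * ∑ i : Fin (n + 1), cellStep h
            (fun j => w k (((j + i : Fin (n + 1)) : ℕ) * h + h)) (x - e k)) := by
          gcongr
          exact setLIntegral_le_sum_cellStep_add (hw k) hh ht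
      _ = _ := by rw [← mul_assoc, hscale]
  · simp only [not_exists] at hx
    simp [glue_apply_of_forall_notMem hx]

theorem RINorm.N_glue_setLIntegral_rearr_le (X : RINorm μI) {h : ℝ} {n : ℕ} (hh : 0 < h)
    (hN : ((n + 1 : ℕ) : ℝ) * h = δ) (he : ∀ k, 0 ≤ e k)
    (hd : Pairwise (Disjoint on fun k => Ioc (e k) (e k + δ))) (hg : Measurable g) :
    X.N (glue δ e fun k _ => (ENNReal.ofReal δ)⁻¹ *
      ∫⁻ t in Ioc h δ, rearr μI ((Ioc (e k) (e k + δ)).indicator g) t) ≤ X.N g := by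
  set w := fun k => rearr μI ((Ioc (e k) (e k + δ)).indicator g)
  set V : Fin (n + 1) → ℝ → ℝ≥0∞ := fun i => glue δ e fun k =>
    cellStep h fun j => w k (((j + i : Fin (n + 1)) : ℕ) * h + h)
  have hV : ∀ i, Measurable (V i) := fun i => measurable_glue fun _ => measurable_cellStep _ _
  have hVV : ∀ i, X.N (V i) ≤ X.N (V 0) := fun i =>
    X.N_glue_le he hd he hd (fun _ => measurable_cellStep _ _) (fun _ => measurable_cellStep _ _)
      fun k l => by
        rw [← hN, volume_lt_cellStep_add hh.le (fun j => w k ((j : ℕ) * h + h))]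
        simp only [add_zero]
        rfl
  have hV0 : X.N (V 0) ≤ X.N g := by
    refine le_trans (X.mono _ _ (hV 0) (measurable_glue fun _ => measurable_rearr _ _)
      (.of_forall fun x => glue_mono (fun k t => ?_) x)) (X.N_glue_rearr_le he hd hg)
    simp only [add_zero]
    exact cellStep_le_of_antitone (rearr_antitone _ _) hh.le t
  calc _ ≤ X.N (fun x => ((n + 1 : ℕ) : ℝ≥0∞)⁻¹ * ∑ i, V i x) :=
        X.mono _ _ (measurable_glue fun _ => measurable_const)
          (measurable_const.mul (Finset.measurable_sum _ fun i _ => hV i))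
          (.of_forall (glue_le_average_glue_cellStep hh hN hd fun _ => rearr_antitone _ _))
    _ ≤ X.N g := by simpa using X.N_average_le hV fun i => (hVV i).trans hV0

theorem RINorm.N_averageOp_le (X : RINorm μI) (hδ : 0 < δ) (he : ∀ k, 0 ≤ e k)
    (hd : Pairwise (Disjoint on fun k => Ioc (e k) (e k + δ))) (hg : Measurable g) :
    X.N (averageOp δ e g) ≤ X.N g := by
  set w := fun k => rearr μI ((Ioc (e k) (e k + δ)).indicator g)
  set b : ℕ → ι → ℝ≥0∞ := fun n k =>
    (ENNReal.ofReal δ)⁻¹ * ∫⁻ t in Ioc (δ / (n + 1 : ℕ)) δ, w k t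
  have hmono : Monotone fun n : ℕ => Ioc (δ / (n + 1 : ℕ)) δ := fun m n hmn =>
    Ioc_subset_Ioc_left (by gcongr)
  have hb_mono : ∀ k, Monotone fun n => b n k := fun k m n hmn =>
    mul_le_mul_right (lintegral_mono_set (hmono hmn)) _
  have hb_sup : ∀ k, ⨆ n, b n k =
      (ENNReal.ofReal δ)⁻¹ * ∫⁻ s in Ioc (e k) (e k + δ), g s := fun k => by
    have hJ : Ioc (e k) (e k + δ) ⊆ Ioi 0 :=
      Ioc_subset_Ioi_self.trans (Ioi_subset_Ioi (he k))
    have hsupp : μI {x | 0 < (Ioc (e k) (e k + δ)).indicator g x} ≤ ENNReal.ofReal δ := by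
      refine (measure_mono fun x hx => ?_).trans_eq
        ((μI_eq_volume_of_subset hJ).trans (by simp [Real.volume_Ioc]))
      by_contra hxJ
      simp [indicator_of_notMem hxJ] at hx
    rw [← ENNReal.mul_iSup, ← setLIntegral_iUnion_of_directed _ hmono.directed_le,
      iUnion_Ioc_div_add_one hδ.le, setLIntegral_Ioc_rearr (hg.indicator measurableSet_Ioc) hsupp,
      lintegral_indicator measurableSet_Ioc, setLIntegral_μI measurableSet_Ioc hJ]
  have hsup : averageOp δ e g = fun x => ⨆ n, glue δ e (fun k _ => b n k) x := by
    funext x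
    by_cases hx : ∃ k, x ∈ Ioc (e k) (e k + δ)
    · obtain ⟨k, hk⟩ := hx
      simp only [averageOp, glue_apply_of_mem hd hk, hb_sup]
    · simp only [not_exists] at hx
      simp [averageOp, glue_apply_of_forall_notMem hx]
  rw [hsup]
  exact X.N_iSup_le (fun n => measurable_glue fun _ => measurable_const)
    (fun x m n hmn => glue_mono (fun k _ => hb_mono k hmn) x) fun n =>
      X.N_glue_setLIntegral_rearr_le (by positivity) (by field_simp) he hd hg

end Averaging

section Estimate

variable {δ : ℝ}

def rearrTailNorm (X Y : RINorm μI) (δ : ℝ) : ℝ≥0∞ :=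
  ⨆ (f : ℝ → ℝ≥0∞) (_ : Measurable f) (_ : X.N f ≤ 1),
    Y.N ((Set.Ioi δ).indicator fun t => rearr μI f t)

theorem le_rearrTailNorm {X : RINorm μI} (Y : RINorm μI) {f : ℝ → ℝ≥0∞} (hf : Measurable f)
    (hfX : X.N f ≤ 1) : Y.N ((Ioi δ).indicator (rearr μI f)) ≤ rearrTailNorm X Y δ :=
  le_iSup₂_of_le (f := fun f (_ : Measurable f) => ⨆ (_ : X.N f ≤ 1),
    Y.N ((Ioi δ).indicator fun t => rearr μI f t)) f hf (le_iSup_of_le hfX le_rfl)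

theorem RINorm.N_indicator_Ioi_rearr_le (X Y : RINorm μI) {f : ℝ → ℝ≥0∞} (hf : Measurable f)
    (hfX : X.N f ≠ ⊤) : Y.N ((Ioi δ).indicator (rearr μI f)) ≤ rearrTailNorm X Y δ * X.N f := by
  rcases eq_or_ne (X.N f) 0 with h0 | h0
  · have hf0 : μI {x | 0 < f x} = 0 :=
      measure_mono_null (fun x hx => hx.ne') (ae_iff.1 ((X.eq_zero_iff f hf).1 h0))
    have hzero : ∀ t, rearr μI f t = 0 := fun t =>
      rearr_eq_zero_of_measure_le (by rw [hf0]; exact zero_le)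
    have : (Ioi δ).indicator (rearr μI f) = fun _ => 0 := funext fun t => by simp [hzero]
    rw [this, Y.N_zero]
    exact zero_le
  set c := X.N f
  have hscaled : X.N (fun x => c⁻¹ * f x) ≤ 1 := by
    rw [X.N_const_mul (ENNReal.inv_ne_top.2 h0) hf, ENNReal.inv_mul_cancel h0 hfX]
  have hmem := le_rearrTailNorm (δ := δ) Y (hf.const_mul c⁻¹) hscaled
  have hind : (Ioi δ).indicator (rearr μI fun x => c⁻¹ * f x) =
      fun t => c⁻¹ * (Ioi δ).indicator (rearr μI f) t := by
    rw [funext (rearr_const_mul (ENNReal.inv_ne_zero.2 hfX) (ENNReal.inv_ne_top.2 h0))]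
    exact funext (indicator_const_mul _ _ _)
  rw [hind, Y.N_const_mul (ENNReal.inv_ne_top.2 h0)
    ((measurable_rearr μI f).indicator measurableSet_Ioi), ENNReal.inv_mul_le_iff h0 hfX] at hmem
  rw [mul_comm]
  exact hmem

theorem RINorm.N_indicator_Iic_rearr_le (Y : RINorm μI) {f : ℝ → ℝ≥0∞} {C : ℝ≥0∞} (hC : C ≠ ⊤)
    (hfC : ∀ x, f x ≤ C) : Y.N ((Iic δ).indicator (rearr μI f)) ≤ C * fund Y δ := by
  calc Y.N ((Iic δ).indicator (rearr μI f)) ≤ Y.N ((Ioc 0 δ).indicator fun _ => C) := by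
        refine Y.mono _ _ ((measurable_rearr μI f).indicator measurableSet_Iic)
          (measurable_const.indicator measurableSet_Ioc)
          ((ae_restrict_mem measurableSet_Ioi).mono fun t (ht : 0 < t) => ?_)
        by_cases htδ : t ≤ δ
        · simp only [indicator_of_mem (show t ∈ Iic δ from htδ),
            indicator_of_mem (show t ∈ Ioc 0 δ from ⟨ht, htδ⟩)]
          exact rearr_le_of_le hfC t
        · simp [indicator_of_notMem (show t ∉ Iic δ from htδ)]
    _ = C * fund Y δ := Y.N_indicator_const_s1 measurableSet_Ioc
        (by rw [μI_eq_volume_of_subset Ioc_subset_Ioi_self, Real.volume_Ioc, sub_zero]) hC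

theorem RINorm.average_mul_fund_le (X : RINorm μI) (hδ : 0 < δ) {a : ℝ} (ha : 0 ≤ a)
    {g : ℝ → ℝ≥0∞} (hg : Measurable g) :
    (ENNReal.ofReal δ)⁻¹ * (∫⁻ s in Ioc a (a + δ), g s) * fund X δ ≤ X.N g := by
  rcases eq_or_ne (X.N g) ⊤ with htop | htop
  · simp [htop]
  have hJ : Ioc a (a + δ) ⊆ Ioi 0 := Ioc_subset_Ioi_self.trans (Ioi_subset_Ioi ha)
  have hμJ : μI (Ioc a (a + δ)) = ENNReal.ofReal δ := by
    rw [μI_eq_volume_of_subset hJ, Real.volume_Ioc, add_sub_cancel_left]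
  obtain ⟨C, hC, hCg⟩ := X.exists_integral_le _ measurableSet_Ioc (hμJ ▸ ENNReal.ofReal_lt_top)
  have hint : ∫⁻ s in Ioc a (a + δ), g s ≠ ⊤ := by
    rw [← setLIntegral_μI measurableSet_Ioc hJ]
    exact ne_top_of_le_ne_top (ENNReal.mul_ne_top hC.ne htop) (hCg g hg)
  calc (ENNReal.ofReal δ)⁻¹ * (∫⁻ s in Ioc a (a + δ), g s) * fund X δ
      = X.N ((Ioc a (a + δ)).indicator fun _ =>
          (ENNReal.ofReal δ)⁻¹ * ∫⁻ s in Ioc a (a + δ), g s) :=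
        (X.N_indicator_const_s1 measurableSet_Ioc hμJ (ENNReal.mul_ne_top
          (ENNReal.inv_ne_top.2 (ENNReal.ofReal_pos.2 hδ).ne') hint)).symm
    _ = X.N (averageOp δ (fun _ : Unit => a) g) := by
        congr 1
        funext x
        simp [averageOp, glue]
    _ ≤ X.N g := X.N_averageOp_le hδ (fun _ => ha) Subsingleton.pairwise hg

theorem RINorm.N_averageOp_le_fund_div_add_rearrTailNorm (X Y : RINorm μI) (hδ : 0 < δ)
    {ι : Type*} [Fintype ι] {e : ι → ℝ} (he : ∀ k, 0 ≤ e k)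
    (hd : Pairwise (Disjoint on fun k => Ioc (e k) (e k + δ))) {g : ℝ → ℝ≥0∞}
    (hg : Measurable g) :
    Y.N (averageOp δ e g) ≤ (fund Y δ / fund X δ + rearrTailNorm X Y δ) * X.N g := by
  rcases eq_or_ne (X.N g) ⊤ with htop | htop
  · have : fund Y δ / fund X δ ≠ 0 := by
      simp [ENNReal.div_eq_zero_iff, Y.fund_ne_zero hδ, X.fund_ne_top]
    simp [htop, ENNReal.mul_top, this]
  set R := averageOp δ e g
  have hR : Measurable R := measurable_glue fun _ => measurable_const
  have hRX : X.N R ≤ X.N g := X.N_averageOp_le hδ he hd hg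
  have hRC : ∀ x, R x ≤ X.N g / fund X δ := fun x => by
    by_cases hx : ∃ k, x ∈ Ioc (e k) (e k + δ)
    · obtain ⟨k, hk⟩ := hx
      rw [show R x = _ from glue_apply_of_mem hd hk, ENNReal.le_div_iff_mul_le
        (.inl (X.fund_ne_zero hδ)) (.inl (X.fund_ne_top δ))]
      exact X.average_mul_fund_le hδ (he k) hg
    · simp only [not_exists] at hx
      simp [R, averageOp, glue_apply_of_forall_notMem hx]
  calc Y.N R
      = Y.N (fun t => (Iic δ).indicator (rearr μI R) t + (Ioi δ).indicator (rearr μI R) t) := by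
        rw [← Y.N_rearr hR]
        congr 1
        funext t
        rw [← compl_Iic, indicator_self_add_compl_apply]
    _ ≤ Y.N ((Iic δ).indicator (rearr μI R)) + Y.N ((Ioi δ).indicator (rearr μI R)) :=
        Y.add_le _ _ ((measurable_rearr μI R).indicator measurableSet_Iic)
          ((measurable_rearr μI R).indicator measurableSet_Ioi)
    _ ≤ X.N g / fund X δ * fund Y δ + rearrTailNorm X Y δ * X.N g :=
        add_le_add (Y.N_indicator_Iic_rearr_le (ENNReal.div_ne_top htop (X.fund_ne_zero hδ)) hRC)
          ((X.N_indicator_Ioi_rearr_le Y hR (ne_top_of_le_ne_top htop hRX)).trans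
            (mul_le_mul_right hRX _))
    _ = (fund Y δ / fund X δ + rearrTailNorm X Y δ) * X.N g := by
        rw [ENNReal.div_eq_inv_mul, ENNReal.div_eq_inv_mul]
        ring

end Estimate

section Intervals

variable {δ : ℝ}

theorem nonneg_of_Ioo_subset_Ioi (hδ : 0 < δ) {a : ℝ} (h : Ioo a (a + δ) ⊆ Ioi 0) : 0 ≤ a := by
  by_contra! ha
  obtain ⟨x, hax, hx⟩ := exists_between (lt_min (lt_add_of_pos_right a hδ) ha)
  exact (h ⟨hax, hx.trans_le (min_le_left _ _)⟩).not_ge (hx.trans_le (min_le_right _ _)).le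

theorem ae_eq_Ioc_of_Ioo_subset_of_subset_Icc {s : Set ℝ} {a b : ℝ} (h₁ : Ioo a b ⊆ s)
    (h₂ : s ⊆ Icc a b) : s =ᵐ[volume] Ioc a b :=
  (h₂.eventuallyLE.trans Ioc_ae_eq_Icc.symm.le).antisymm
    (Ioo_ae_eq_Ioc.symm.le.trans h₁.eventuallyLE)

theorem measurableSet_of_Ioo_subset_of_subset_Icc {s : Set ℝ} {a b : ℝ} (hab : a ≤ b)
    (h₁ : Ioo a b ⊆ s) (h₂ : s ⊆ Icc a b) : MeasurableSet s := by
  rw [← union_sdiff_cancel h₁]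
  exact measurableSet_Ioo.union (((toFinite {a, b}).subset
    ((sdiff_subset_sdiff_left h₂).trans (Icc_sdiff_Ioo_same hab).subset)).measurableSet)

theorem disjoint_Ioc_of_disjoint_interior {s t : Set ℝ} {a b : ℝ} (hs : Ioo a (a + δ) ⊆ s)
    (ht : Ioo b (b + δ) ⊆ t) (hst : interior s ∩ interior t = ∅) :
    Disjoint (Ioc a (a + δ)) (Ioc b (b + δ)) :=
  Ioc_disjoint_Ioc.2 <| Ioo_disjoint_Ioo.1 <| disjoint_iff_inter_eq_empty.2 <|
    subset_empty_iff.1 (hst ▸ inter_subset_inter (interior_maximal hs isOpen_Ioo)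
      (interior_maximal ht isOpen_Ioo))

theorem sum_indicator_average_union_ae_le {M : ℕ} {I : Fin (M + 1) → Set ℝ} {e : Fin (M + 1) → ℝ}
    (hI : ∀ j, I j =ᵐ[volume] Ioc (e j) (e j + δ)) (g : ℝ → ℝ≥0∞) :
    (fun t => ∑ j : Fin M, (I j.castSucc).indicator
        (fun _ => (ENNReal.ofReal δ)⁻¹ * ∫⁻ s in I j.castSucc ∪ I j.succ, g s) t) ≤ᵐ[μI]
      fun t => averageOp δ (e ∘ Fin.castSucc) g t +
        glue δ (e ∘ Fin.castSucc) (fun j _ => (ENNReal.ofReal δ)⁻¹ *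
          ∫⁻ s in Ioc (e j.succ) (e j.succ + δ), g s) t := by
  have hmem : ∀ᵐ t ∂μI, ∀ j, (t ∈ I j) = (t ∈ Ioc (e j) (e j + δ)) :=
    ae_restrict_of_ae (ae_all_iff.2 hI)
  filter_upwards [hmem] with t ht
  simp only [averageOp, glue, Function.comp_apply, ← Finset.sum_add_distrib]
  refine Finset.sum_le_sum fun j _ => ?_
  by_cases htj : t ∈ I j.castSucc
  · have htj' : t ∈ Ioc (e j.castSucc) (e j.castSucc + δ) := ht j.castSucc ▸ htj
    simp only [indicator_of_mem htj, indicator_of_mem htj', ← mul_add]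
    gcongr
    rw [← setLIntegral_congr (hI _), ← setLIntegral_congr (hI _)]
    exact lintegral_union_le _ _ _
  · simp [indicator_of_notMem htj]

theorem RINorm.N_sum_indicator_average_union_le (Y : RINorm μI) {M : ℕ}
    {I : Fin (M + 1) → Set ℝ} {e : Fin (M + 1) → ℝ} (he : ∀ j, 0 ≤ e j)
    (hd : Pairwise (Disjoint on fun j => Ioc (e j) (e j + δ)))
    (hI : ∀ j, I j =ᵐ[volume] Ioc (e j) (e j + δ)) (hImeas : ∀ j, MeasurableSet (I j))
    (g : ℝ → ℝ≥0∞) :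
    Y.N (fun t => ∑ j : Fin M, (I j.castSucc).indicator
        (fun _ => (ENNReal.ofReal δ)⁻¹ * ∫⁻ s in I j.castSucc ∪ I j.succ, g s) t) ≤
      Y.N (averageOp δ (e ∘ Fin.castSucc) g) + Y.N (averageOp δ (e ∘ Fin.succ) g) := by
  have hd₀ := hd.comp_of_injective (Fin.castSucc_injective M)
  have hd₁ := hd.comp_of_injective (Fin.succ_injective M)
  have hmeas : ∀ {ι : Type} [Fintype ι] (e' : ι → ℝ) (c : ι → ℝ≥0∞),
      Measurable (glue δ e' fun k _ => c k) := fun _ _ => measurable_glue fun _ => measurable_const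
  calc _ ≤ _ := Y.mono _ _ (Finset.measurable_sum _ fun j _ => measurable_const.indicator
          (hImeas _)) ((hmeas _ _).add (hmeas _ _)) (sum_indicator_average_union_ae_le hI g)
    _ ≤ _ := Y.add_le _ _ (hmeas _ _) (hmeas _ _)
    _ ≤ _ := add_le_add le_rfl (Y.N_glue_le (fun _ => he _) hd₀ (fun _ => he _) hd₁
          (fun _ => measurable_const) (fun _ => measurable_const) fun _ _ => le_rfl)

end Intervals

/-- the averaging estimate (Proposition on averaging in r.i. spaces). -/
theorem averaging_estimate (M : ℕ) (δ : ℝ) (hδ : 0 < δ) (I : Fin (M + 1) → Set ℝ)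
    (hIval : ∀ j, ∃ e : ℝ, Set.Ioo e (e + δ) ⊆ I j ∧ I j ⊆ Set.Icc e (e + δ))
    (hIpos : ∀ j, I j ⊆ Set.Ioi 0)
    (hIdisj : ∀ j k, j ≠ k → interior (I j) ∩ interior (I k) = ∅)
    (X Y : RINorm μI) (g : ℝ → ℝ≥0∞) (hg : Measurable g) :
    Y.N (fun t => ∑ j : Fin M,
        (I j.castSucc).indicator
          (fun _ => (ENNReal.ofReal δ)⁻¹ * ∫⁻ s in I j.castSucc ∪ I j.succ, g s) t)
      ≤ 2 * (fund Y δ / fund X δ +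
            ⨆ (f : ℝ → ℝ≥0∞) (_ : Measurable f) (_ : X.N f ≤ 1),
              Y.N ((Set.Ioi δ).indicator fun t => rearr μI f t)) * X.N g := by
  choose e hIoo hIcc using hIval
  have he : ∀ j, 0 ≤ e j := fun j => nonneg_of_Ioo_subset_Ioi hδ ((hIoo j).trans (hIpos j))
  have hd : Pairwise (Disjoint on fun j => Ioc (e j) (e j + δ)) := fun j k hjk =>
    disjoint_Ioc_of_disjoint_interior (hIoo j) (hIoo k) (hIdisj j k hjk)
  calc _ ≤ Y.N (averageOp δ (e ∘ Fin.castSucc) g) + Y.N (averageOp δ (e ∘ Fin.succ) g) :=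
        Y.N_sum_indicator_average_union_le he hd
          (fun j => ae_eq_Ioc_of_Ioo_subset_of_subset_Icc (hIoo j) (hIcc j))
          (fun j => measurableSet_of_Ioo_subset_of_subset_Icc (by linarith) (hIoo j) (hIcc j)) g
    _ ≤ (fund Y δ / fund X δ + rearrTailNorm X Y δ) * X.N g +
          (fund Y δ / fund X δ + rearrTailNorm X Y δ) * X.N g := add_le_add
        (X.N_averageOp_le_fund_div_add_rearrTailNorm Y hδ (fun _ => he _)
          (hd.comp_of_injective (Fin.castSucc_injective M)) hg)
        (X.N_averageOp_le_fund_div_add_rearrTailNorm Y hδ (fun _ => he _)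
          (hd.comp_of_injective (Fin.succ_injective M)) hg)
    _ = _ := by
        rw [← two_mul, ← mul_assoc]
        rfl

end
end
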